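/- arXiv:2103.14392 — 3 statements merged into one kernel-verified Lean document; each statement's English description precedes it below -/
import Mathlib

section
/- Let F : ℝ^d → ℝ be μ-strongly convex (μ > 0) with global minimizer x*, let L > 0, β > 0, R₀ > 0, and let z : ℕ → ℝ^d be a sequence with ‖z₀ − x*‖ ≤ R₀. For s ≥ 1 set R_{s−1} := R₀·2^{−(s−1)} and let t_s be any real number satisfying t_s ≥ 2(196 L R_{s−1}/μ)^{1/3} and t_s ≥ 8(24β/μ)^{1/2}, and assume the per-stage guarantee F(z_s) − F(x*) ≤ 98L‖z_{s−1} − x*‖³ / t_s³ + 48β‖z_{s−1} − x*‖² / t_s². Then for every s ≥ 0, ‖z_s − x*‖ ≤ R₀·2^{−s}. -/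
/-- Strong convexity lower bound at the minimizer. -/
lemma sc_lower_bound {d : ℕ} (F : EuclideanSpace ℝ (Fin d) → ℝ) (μ : ℝ) (hμ : 0 < μ)
    (xstar : EuclideanSpace ℝ (Fin d))
    (hsc : ConvexOn ℝ Set.univ (fun x => F x - μ / 2 * ‖x‖ ^ 2))
    (hmin : ∀ u, F xstar ≤ F u) (v : EuclideanSpace ℝ (Fin d)) :
    μ / 2 * ‖v - xstar‖ ^ 2 ≤ F v - F xstar := by
  have hU : StrongConvexOn Set.univ μ F := strongConvexOn_iff_convex.mpr hsc
  -- For all b ∈ (0,1], (1-b) * (μ/2 * ‖v - xstar‖^2) ≤ F v - F xstar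
  have key : ∀ b : ℝ, 0 < b → b ≤ 1 →
      (1 - b) * (μ / 2 * ‖xstar - v‖ ^ 2) ≤ F v - F xstar := by
    intro b hb hb1
    have ha : (0:ℝ) ≤ 1 - b := by linarith
    have h2 := hU.2 (Set.mem_univ xstar) (Set.mem_univ v) ha hb.le (by ring)
    have h3 := hmin ((1 - b) • xstar + b • v)
    have : (1 - b) * b * (μ / 2 * ‖xstar - v‖ ^ 2) ≤ b * (F v - F xstar) := by
      simp only [smul_eq_mul] at h2
      nlinarith
    have := (mul_le_mul_iff_right₀ hb).mp (by linarith [this] : b * ((1 - b) * (μ / 2 * ‖xstar - v‖ ^ 2)) ≤ b * (F v - F xstar))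
    linarith
  have hnorm : ‖xstar - v‖ = ‖v - xstar‖ := norm_sub_rev _ _
  set c : ℝ := μ / 2 * ‖v - xstar‖ ^ 2 with hc
  have hc0 : 0 ≤ c := by positivity
  set D : ℝ := F v - F xstar with hD
  have key' : ∀ b : ℝ, 0 < b → b ≤ 1 → (1 - b) * c ≤ D := by
    intro b hb hb1; have := key b hb hb1; rw [hnorm] at this; exact this
  have hD0 : 0 ≤ D := by have := key' 1 one_pos le_rfl; linarith
  refine le_of_forall_pos_le_add ?_
  intro ε hε
  by_cases hcε : c ≤ ε
  · linarith
  · push_neg at hcε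
    have hcpos : 0 < c := lt_trans hε hcε
    have hb : 0 < ε / c := by positivity
    have hb1 : ε / c ≤ 1 := by rw [div_le_one hcpos]; linarith
    have := key' (ε / c) hb hb1
    have hcc : (1 - ε / c) * c = c - ε := by field_simp
    linarith [hcc ▸ this]

/-- Linear convergence in argument of the restarted scheme: under the
per-stage guarantee of the accelerated cubic-regularized Newton method with `t_s` iterations
at restart `s`, one has `‖z_s − x*‖ ≤ R₀·2^{−s}` for all `s ≥ 0`. -/
theorem stmt_2 {d : ℕ} (F : EuclideanSpace ℝ (Fin d) → ℝ) (μ L β R₀ : ℝ)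
    (hμ : 0 < μ) (hL : 0 < L) (hβ : 0 < β) (hR₀ : 0 < R₀)
    (xstar : EuclideanSpace ℝ (Fin d))
    (hsc : ConvexOn ℝ Set.univ (fun x => F x - μ / 2 * ‖x‖ ^ 2))
    (hmin : ∀ u, F xstar ≤ F u)
    (z : ℕ → EuclideanSpace ℝ (Fin d)) (t : ℕ → ℝ)
    (hz0 : ‖z 0 - xstar‖ ≤ R₀)
    (ht1 : ∀ s : ℕ, 2 * (196 * L * (R₀ / 2 ^ s) / μ) ^ ((1 : ℝ) / 3) ≤ t (s + 1))
    (ht2 : ∀ s : ℕ, 8 * (24 * β / μ) ^ ((1 : ℝ) / 2) ≤ t (s + 1))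
    (hstage : ∀ s : ℕ, F (z (s + 1)) - F xstar ≤
      98 * L * ‖z s - xstar‖ ^ 3 / (t (s + 1)) ^ 3
        + 48 * β * ‖z s - xstar‖ ^ 2 / (t (s + 1)) ^ 2) :
    ∀ s : ℕ, ‖z s - xstar‖ ≤ R₀ / 2 ^ s := by
  intro s
  induction s with
  | zero => simpa using hz0
  | succ s ih =>
    set Rs : ℝ := R₀ / 2 ^ s with hRsdef
    have hRs : 0 < Rs := by positivity
    set τ : ℝ := t (s + 1) with hτ
    have hX : (0:ℝ) < 196 * L * Rs / μ := by positivity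
    have hY : (0:ℝ) < 24 * β / μ := by positivity
    have hτpos : 0 < τ := by
      have h := ht1 s
      have h1 : (0:ℝ) < 2 * (196 * L * (R₀ / 2 ^ s) / μ) ^ ((1 : ℝ) / 3) := by positivity
      linarith
    -- cube the first bound
    have hcube : ((196 * L * Rs / μ) ^ ((1 : ℝ) / 3)) ^ (3:ℕ) = 196 * L * Rs / μ := by
      rw [← Real.rpow_natCast ((196 * L * Rs / μ) ^ ((1:ℝ)/3)) 3, ← Real.rpow_mul hX.le]
      norm_num
    have ht3 : 8 * (196 * L * Rs / μ) ≤ τ ^ 3 := by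
      have h := ht1 s
      have hnn : (0:ℝ) ≤ 2 * (196 * L * Rs / μ) ^ ((1:ℝ)/3) := by positivity
      have := pow_le_pow_left₀ hnn h 3
      calc 8 * (196 * L * Rs / μ)
          = (2 * (196 * L * Rs / μ) ^ ((1:ℝ)/3)) ^ (3:ℕ) := by
            rw [mul_pow]; rw [hcube]; norm_num
        _ ≤ τ ^ 3 := this
    have ht3' : 1568 * L * Rs ≤ μ * τ ^ 3 := by
      have h8 : 8 * (196 * L * Rs / μ) * μ ≤ τ ^ 3 * μ :=
        mul_le_mul_of_nonneg_right ht3 hμ.le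
      have hcancel : 8 * (196 * L * Rs / μ) * μ = 1568 * L * Rs := by
        field_simp; ring
      rw [hcancel] at h8; linarith
    -- square the second bound
    have hsq : ((24 * β / μ) ^ ((1 : ℝ) / 2)) ^ (2:ℕ) = 24 * β / μ := by
      rw [← Real.rpow_natCast ((24 * β / μ) ^ ((1:ℝ)/2)) 2, ← Real.rpow_mul hY.le]
      norm_num
    have ht2sq : 64 * (24 * β / μ) ≤ τ ^ 2 := by
      have h := ht2 s
      have hnn : (0:ℝ) ≤ 8 * (24 * β / μ) ^ ((1:ℝ)/2) := by positivity
      have := pow_le_pow_left₀ hnn h 2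
      calc 64 * (24 * β / μ) = (8 * (24 * β / μ) ^ ((1:ℝ)/2)) ^ (2:ℕ) := by
            rw [mul_pow]; rw [hsq]; norm_num
        _ ≤ τ ^ 2 := this
    have ht2' : 1536 * β ≤ μ * τ ^ 2 := by
      have h8 : 64 * (24 * β / μ) * μ ≤ τ ^ 2 * μ :=
        mul_le_mul_of_nonneg_right ht2sq hμ.le
      have hcancel : 64 * (24 * β / μ) * μ = 1536 * β := by field_simp; ring
      rw [hcancel] at h8; linarith
    -- bound the stage decrease
    have hzn : (0:ℝ) ≤ ‖z s - xstar‖ := norm_nonneg _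
    have hz3 : ‖z s - xstar‖ ^ 3 ≤ Rs ^ 3 := pow_le_pow_left₀ hzn ih 3
    have hz2 : ‖z s - xstar‖ ^ 2 ≤ Rs ^ 2 := pow_le_pow_left₀ hzn ih 2
    have h1 : 98 * L * ‖z s - xstar‖ ^ 3 / τ ^ 3 ≤ μ * Rs ^ 2 / 16 := by
      rw [div_le_div_iff₀ (by positivity) (by norm_num)]
      nlinarith [mul_le_mul_of_nonneg_right ht3' (sq_nonneg Rs),
        mul_le_mul_of_nonneg_left hz3 (by positivity : (0:ℝ) ≤ 98 * L),
        pow_pos hτpos 3]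
    have h2 : 48 * β * ‖z s - xstar‖ ^ 2 / τ ^ 2 ≤ μ * Rs ^ 2 / 32 := by
      rw [div_le_div_iff₀ (by positivity) (by norm_num)]
      nlinarith [mul_le_mul_of_nonneg_right ht2' (sq_nonneg Rs),
        mul_le_mul_of_nonneg_left hz2 (by positivity : (0:ℝ) ≤ 48 * β),
        pow_pos hτpos 2]
    have hFb : F (z (s + 1)) - F xstar ≤ 3 / 32 * (μ * Rs ^ 2) := by
      have := hstage s
      rw [← hτ] at this
      linarith
    have hlb := sc_lower_bound F μ hμ xstar hsc hmin (z (s + 1))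
    have hsq2 : ‖z (s + 1) - xstar‖ ^ 2 ≤ (Rs / 2) ^ 2 := by
      have hh : μ / 2 * ‖z (s + 1) - xstar‖ ^ 2 ≤ μ / 2 * ((3 : ℝ) / 16 * Rs ^ 2) := by
        calc μ / 2 * ‖z (s + 1) - xstar‖ ^ 2 ≤ 3 / 32 * (μ * Rs ^ 2) := le_trans hlb hFb
          _ = μ / 2 * ((3 : ℝ) / 16 * Rs ^ 2) := by ring
      have := (mul_le_mul_iff_right₀ (by positivity : (0:ℝ) < μ / 2)).mp hh
      nlinarith [sq_nonneg Rs]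
    have hfin : ‖z (s + 1) - xstar‖ ≤ Rs / 2 := by
      have h := Real.sqrt_le_sqrt hsq2
      rwa [Real.sqrt_sq (norm_nonneg _), Real.sqrt_sq (by positivity)] at h
    calc ‖z (s + 1) - xstar‖ ≤ Rs / 2 := hfin
      _ = R₀ / 2 ^ (s + 1) := by rw [hRsdef]; rw [pow_succ]; ring
end

section
/- Let F : ℝ^d → ℝ be μ-strongly convex (μ > 0) with global minimizer x*, let L > 0, β > 0, R₀ > 0, and let z : ℕ → ℝ^d be a sequence with ‖z₀ − x*‖ ≤ R₀. For s ≥ 1 set R_{s−1} := R₀·2^{−(s−1)} and let t_s be any real number satisfying t_s ≥ 2(196 L R_{s−1}/μ)^{1/3} and t_s ≥ 8(24β/μ)^{1/2}, and assume the per-stage guarantee F(z_s) − F(x*) ≤ 98L‖z_{s−1} − x*‖³ / t_s³ + 48β‖z_{s−1} − x*‖² / t_s². Then for every s ≥ 1, F(z_s) − F(x*) ≤ μ R₀² · 2^{−2s−1}. -/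
/-- Linear convergence in function value of the restarted scheme: under the
per-stage guarantee of the accelerated cubic-regularized Newton method with `t_s` iterations
at restart `s`, one has `F(z_s) − F(x*) ≤ μR₀²·2^{−2s−1}` for all `s ≥ 1`. -/
theorem stmt_3 {d : ℕ} (F : EuclideanSpace ℝ (Fin d) → ℝ) (μ L β R₀ : ℝ)
    (hμ : 0 < μ) (hL : 0 < L) (hβ : 0 < β) (hR₀ : 0 < R₀)
    (xstar : EuclideanSpace ℝ (Fin d))
    (hsc : ConvexOn ℝ Set.univ (fun x => F x - μ / 2 * ‖x‖ ^ 2))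
    (hmin : ∀ u, F xstar ≤ F u)
    (z : ℕ → EuclideanSpace ℝ (Fin d)) (t : ℕ → ℝ)
    (hz0 : ‖z 0 - xstar‖ ≤ R₀)
    (ht1 : ∀ s : ℕ, 2 * (196 * L * (R₀ / 2 ^ s) / μ) ^ ((1 : ℝ) / 3) ≤ t (s + 1))
    (ht2 : ∀ s : ℕ, 8 * (24 * β / μ) ^ ((1 : ℝ) / 2) ≤ t (s + 1))
    (hstage : ∀ s : ℕ, F (z (s + 1)) - F xstar ≤
      98 * L * ‖z s - xstar‖ ^ 3 / (t (s + 1)) ^ 3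
        + 48 * β * ‖z s - xstar‖ ^ 2 / (t (s + 1)) ^ 2) :
    ∀ s : ℕ, 1 ≤ s →
      F (z s) - F xstar ≤ μ * R₀ ^ 2 * (2 : ℝ) ^ (-2 * (s : ℝ) - 1) := by
  -- strong convexity inequality at the minimizer
  have sc : ∀ w, μ / 2 * ‖w - xstar‖ ^ 2 ≤ F w - F xstar := by
    intro w
    have key : ∀ τ : ℝ, 0 < τ → τ ≤ 1 →
        τ * (μ / 2 * ‖w - xstar‖ ^ 2 * (1 - τ)) ≤ τ * (F w - F xstar) := by
      intro τ hτ0 hτ1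
      have hcomb := hsc.2 (Set.mem_univ xstar) (Set.mem_univ w)
        (by linarith : (0:ℝ) ≤ 1 - τ) hτ0.le (by ring)
      simp only [smul_eq_mul] at hcomb
      have hm := hmin ((1 - τ) • xstar + τ • w)
      have hvec : (1 - τ) • xstar + τ • w = xstar + τ • (w - xstar) := by module
      have hC : ‖(1 - τ) • xstar + τ • w‖ ^ 2 =
          ‖xstar‖ ^ 2 + 2 * (τ * (inner ℝ xstar (w - xstar) : ℝ)) + τ ^ 2 * ‖w - xstar‖ ^ 2 := by
        rw [hvec, norm_add_sq_real, real_inner_smul_right, norm_smul]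
        rw [mul_pow, Real.norm_eq_abs, sq_abs]
      have hZ : ‖w‖ ^ 2 =
          ‖xstar‖ ^ 2 + 2 * (inner ℝ xstar (w - xstar) : ℝ) + ‖w - xstar‖ ^ 2 := by
        have hw : w = xstar + (w - xstar) := by abel
        conv_lhs => rw [hw]
        rw [norm_add_sq_real]
      rw [hC, hZ] at hcomb
      linarith [hcomb, hm]
    have key2 : ∀ τ : ℝ, 0 < τ → τ ≤ 1 →
        μ / 2 * ‖w - xstar‖ ^ 2 * (1 - τ) ≤ F w - F xstar := by
      intro τ h0 h1
      exact le_of_mul_le_mul_left (key τ h0 h1) h0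
    have hV : 0 ≤ μ / 2 * ‖w - xstar‖ ^ 2 := by positivity
    refine le_of_forall_pos_le_add ?_
    intro ε hε
    set c := μ / 2 * ‖w - xstar‖ ^ 2 with hc
    set τ := min 1 (ε / (c + 1)) with hτ
    have hτ0 : 0 < τ := lt_min one_pos (by positivity)
    have hτ1 : τ ≤ 1 := min_le_left _ _
    have h2 := key2 τ hτ0 hτ1
    have hτε : τ * (c + 1) ≤ ε := by
      have := min_le_right 1 (ε / (c + 1))
      calc τ * (c + 1) ≤ (ε / (c + 1)) * (c + 1) := by
            apply mul_le_mul_of_nonneg_right this (by positivity)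
        _ = ε := by field_simp
      
    nlinarith [mul_nonneg hτ0.le hV]
  -- cube / square of rpow
  have hcube : ∀ x : ℝ, 0 ≤ x → (x ^ ((1:ℝ)/3)) ^ (3:ℕ) = x := by
    intro x hx
    rw [← Real.rpow_natCast (x ^ ((1:ℝ)/3)) 3, ← Real.rpow_mul hx]
    norm_num
  have hsq : ∀ x : ℝ, 0 ≤ x → (x ^ ((1:ℝ)/2)) ^ (2:ℕ) = x := by
    intro x hx
    rw [← Real.rpow_natCast (x ^ ((1:ℝ)/2)) 2, ← Real.rpow_mul hx]
    norm_num
  -- the step bound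
  have step : ∀ s : ℕ, ‖z s - xstar‖ ≤ R₀ / 2 ^ s →
      F (z (s + 1)) - F xstar ≤ 3 / 32 * (μ * (R₀ / 2 ^ s) ^ 2) := by
    intro s hs
    set Rs := R₀ / 2 ^ s with hRs
    have hRs0 : 0 < Rs := by positivity
    have ha : (0:ℝ) < 196 * L * Rs / μ := by positivity
    have hb : (0:ℝ) < 24 * β / μ := by positivity
    have hT0 : 0 < t (s + 1) :=
      lt_of_lt_of_le (by positivity) (ht1 s)
    have hT3 : 8 * (196 * L * Rs / μ) ≤ t (s + 1) ^ 3 := by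
      calc 8 * (196 * L * Rs / μ)
          = (2 * (196 * L * Rs / μ) ^ ((1:ℝ)/3)) ^ 3 := by
            rw [mul_pow, hcube _ ha.le]; ring
        _ ≤ t (s + 1) ^ 3 := pow_le_pow_left₀ (by positivity) (ht1 s) 3
    have hT2 : 64 * (24 * β / μ) ≤ t (s + 1) ^ 2 := by
      calc 64 * (24 * β / μ)
          = (8 * (24 * β / μ) ^ ((1:ℝ)/2)) ^ 2 := by
            rw [mul_pow, hsq _ hb.le]; ring
        _ ≤ t (s + 1) ^ 2 := pow_le_pow_left₀ (by positivity) (ht2 s) 2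
    have h1 : 98 * L * ‖z s - xstar‖ ^ 3 / t (s + 1) ^ 3 ≤ μ * Rs ^ 2 / 16 := by
      have hnum : 98 * L * ‖z s - xstar‖ ^ 3 ≤ 98 * L * Rs ^ 3 := by
        have := pow_le_pow_left₀ (norm_nonneg (z s - xstar)) hs 3
        nlinarith
      calc 98 * L * ‖z s - xstar‖ ^ 3 / t (s + 1) ^ 3
          ≤ 98 * L * Rs ^ 3 / (8 * (196 * L * Rs / μ)) :=
            div_le_div₀ (by positivity) hnum (by positivity) hT3
        _ = μ * Rs ^ 2 / 16 := by field_simp; ring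
    have h2 : 48 * β * ‖z s - xstar‖ ^ 2 / t (s + 1) ^ 2 ≤ μ * Rs ^ 2 / 32 := by
      have hnum : 48 * β * ‖z s - xstar‖ ^ 2 ≤ 48 * β * Rs ^ 2 := by
        have := pow_le_pow_left₀ (norm_nonneg (z s - xstar)) hs 2
        nlinarith
      calc 48 * β * ‖z s - xstar‖ ^ 2 / t (s + 1) ^ 2
          ≤ 48 * β * Rs ^ 2 / (64 * (24 * β / μ)) :=
            div_le_div₀ (by positivity) hnum (by positivity) hT2
        _ = μ * Rs ^ 2 / 32 := by field_simp; ring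
    have := hstage s
    linarith
  -- norm decay by induction
  have hnorm : ∀ s : ℕ, ‖z s - xstar‖ ≤ R₀ / 2 ^ s := by
    intro s
    induction s with
    | zero => simpa using hz0
    | succ n ih =>
      have hF := step n ih
      have hsc' := sc (z (n + 1))
      have hRn : (0:ℝ) < R₀ / 2 ^ n := by positivity
      have hsqle : ‖z (n + 1) - xstar‖ ^ 2 ≤ (R₀ / 2 ^ (n + 1)) ^ 2 := by
        have : (R₀ / 2 ^ (n + 1)) = (R₀ / 2 ^ n) / 2 := by
          rw [pow_succ]; ring
        rw [this]
        nlinarith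
      have h2 : (0:ℝ) ≤ R₀ / 2 ^ (n + 1) := by positivity
      nlinarith [norm_nonneg (z (n + 1) - xstar)]
  -- conclusion
  intro s hs
  obtain ⟨n, rfl⟩ := Nat.exists_eq_add_of_le hs
  have hF := step n (hnorm n)
  have hpow : (2:ℝ) ^ (-2 * ((1 + n : ℕ) : ℝ) - 1) = ((2:ℝ) ^ (2 * n + 3 : ℕ))⁻¹ := by
    rw [show (-2 * ((1 + n : ℕ) : ℝ) - 1) = -((2 * n + 3 : ℕ) : ℝ) by push_cast; ring,
      Real.rpow_neg (by norm_num), Real.rpow_natCast]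
  have h1n : z (1 + n) = z (n + 1) := by rw [Nat.add_comm]
  rw [hpow, h1n]
  have hP : ((2:ℝ) ^ (2 * n + 3 : ℕ)) = 8 * ((2:ℝ) ^ n) ^ 2 := by
    rw [pow_add, mul_comm 2 n, pow_mul]; ring
  have h2n : (0:ℝ) < (2:ℝ) ^ n := by positivity
  have heq : μ * R₀ ^ 2 * ((2:ℝ) ^ (2 * n + 3 : ℕ))⁻¹ = (1/8) * (μ * (R₀ / 2 ^ n) ^ 2) := by
    rw [hP]
    have h8 : ((2:ℝ) ^ n) ≠ 0 := by positivity
    field_simp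
  rw [heq]
  have hpos : (0:ℝ) ≤ μ * (R₀ / 2 ^ n) ^ 2 := by positivity
  linarith
end

section
/- (Distance bound after T communication rounds.) Let F : ℝ^d → ℝ be μ-strongly convex (μ > 0) with global minimizer x*, let L > 0, β > 0, R₀ > 0, and let z : ℕ → ℝ^d be a sequence with ‖z₀ − x*‖ ≤ R₀ such that for every s ≥ 1, with R_{s−1} := R₀·2^{−(s−1)} and t_s := 2·max{ (196 L R_{s−1}/μ)^{1/3}, 4(24β/μ)^{1/2} }, the per-stage guarantee F(z_s) − F(x*) ≤ 98L‖z_{s−1} − x*‖³ / t_s³ + 48β‖z_{s−1} − x*‖² / t_s² holds. Set τ₁ := 2(196 L R₀/μ)^{1/3} and τ₂ := 8(24β/μ)^{1/2}. Then: (i) t_s ≤ max{τ₁, τ₂} for every s ≥ 1; and (ii) for every real T ≥ 0, letting s* := ⌊T/(2·max{τ₁, τ₂})⌋, one has Σ_{s=1}^{s*} 2t_s ≤ T and ‖z_{s*} − x*‖ ≤ R₀ · 2^{−⌊T/(2·max{τ₁, τ₂})⌋} ≤ 2R₀ · 2^{−T/(2·max{τ₁, τ₂})}. -/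
open RealInnerProductSpace

lemma aux_sc6 {d : ℕ} (F : EuclideanSpace ℝ (Fin d) → ℝ) (μ : ℝ)
    (xstar : EuclideanSpace ℝ (Fin d))
    (hsc : ConvexOn ℝ Set.univ (fun x => F x - μ / 2 * ‖x‖ ^ 2))
    (hmin : ∀ u, F xstar ≤ F u) (z : EuclideanSpace ℝ (Fin d)) :
    3 * μ / 8 * ‖z - xstar‖ ^ 2 ≤ F z - F xstar := by
  have hcv := hsc.2 (Set.mem_univ xstar) (Set.mem_univ z)
    (by norm_num : (0:ℝ) ≤ 3/4) (by norm_num : (0:ℝ) ≤ 1/4) (by norm_num)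
  simp only at hcv
  set w := z - xstar with hw
  have hx : (3/4 : ℝ) • xstar + (1/4 : ℝ) • z = xstar + (1/4:ℝ) • w := by
    rw [hw]; module
  have hmin' := hmin ((3/4:ℝ) • xstar + (1/4:ℝ) • z)
  rw [hx] at hcv hmin'
  have h1 : ‖xstar + (1/4:ℝ) • w‖ ^ 2
      = ‖xstar‖ ^ 2 + 2 * ((1/4) * ⟪xstar, w⟫) + (1/16) * ‖w‖ ^ 2 := by
    rw [norm_add_sq_real, real_inner_smul_right, norm_smul]
    rw [mul_pow]
    norm_num
  have h2 : ‖z‖ ^ 2 = ‖xstar‖ ^ 2 + 2 * ⟪xstar, w⟫ + ‖w‖ ^ 2 := by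
    have : z = xstar + w := by rw [hw]; abel
    rw [this, norm_add_sq_real]
  simp only [smul_eq_mul] at hcv
  rw [h1, h2] at hcv
  linarith [hcv, hmin']

set_option maxHeartbeats 1000000 in
/-- Distance bound after `T` communication rounds of the restarted
accelerated cubic-regularized Newton method (two communication rounds per inner iteration):
(i) `t_s ≤ max{τ₁, τ₂}` for all `s ≥ 1`; (ii) for every `T ≥ 0`, with
`s* = ⌊T/(2 max{τ₁,τ₂})⌋`, one has `Σ_{s=1}^{s*} 2 t_s ≤ T` and
`‖z_{s*} − x*‖ ≤ R₀·2^{−s*} ≤ 2R₀·2^{−T/(2 max{τ₁,τ₂})}`. -/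
theorem stmt_6 {d : ℕ} (F : EuclideanSpace ℝ (Fin d) → ℝ) (μ L β R₀ : ℝ)
    (hμ : 0 < μ) (hL : 0 < L) (hβ : 0 < β) (hR₀ : 0 < R₀)
    (xstar : EuclideanSpace ℝ (Fin d))
    (hsc : ConvexOn ℝ Set.univ (fun x => F x - μ / 2 * ‖x‖ ^ 2))
    (hmin : ∀ u, F xstar ≤ F u)
    (z : ℕ → EuclideanSpace ℝ (Fin d)) (t : ℕ → ℝ)
    (hz0 : ‖z 0 - xstar‖ ≤ R₀)
    (ht : ∀ s : ℕ, t (s + 1) =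
      2 * max ((196 * L * (R₀ / 2 ^ s) / μ) ^ ((1 : ℝ) / 3))
        (4 * (24 * β / μ) ^ ((1 : ℝ) / 2)))
    (hstage : ∀ s : ℕ, F (z (s + 1)) - F xstar ≤
      98 * L * ‖z s - xstar‖ ^ 3 / (t (s + 1)) ^ 3
        + 48 * β * ‖z s - xstar‖ ^ 2 / (t (s + 1)) ^ 2)
    (τ₁ τ₂ : ℝ)
    (hτ₁ : τ₁ = 2 * (196 * L * R₀ / μ) ^ ((1 : ℝ) / 3))
    (hτ₂ : τ₂ = 8 * (24 * β / μ) ^ ((1 : ℝ) / 2)) :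
    (∀ s : ℕ, 1 ≤ s → t s ≤ max τ₁ τ₂) ∧
    (∀ T : ℝ, 0 ≤ T →
      (∑ i ∈ Finset.range ⌊T / (2 * max τ₁ τ₂)⌋₊, 2 * t (i + 1)) ≤ T ∧
      ‖z ⌊T / (2 * max τ₁ τ₂)⌋₊ - xstar‖
        ≤ R₀ * (2 : ℝ) ^ (-(⌊T / (2 * max τ₁ τ₂)⌋₊ : ℝ)) ∧
      R₀ * (2 : ℝ) ^ (-(⌊T / (2 * max τ₁ τ₂)⌋₊ : ℝ))
        ≤ 2 * R₀ * (2 : ℝ) ^ (-(T / (2 * max τ₁ τ₂)))) := by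
  -- the main distance induction
  have hdist : ∀ s : ℕ, ‖z s - xstar‖ ≤ R₀ / 2 ^ s := by
    intro s
    induction s with
    | zero => simpa using hz0
    | succ s ih =>
      set r := ‖z s - xstar‖ with hrdef
      have hrn : 0 ≤ r := norm_nonneg _
      set Rs := R₀ / 2 ^ s with hRs
      have hRs0 : 0 < Rs := by positivity
      set a := (196 * L * Rs / μ) ^ ((1:ℝ)/3) with ha
      have hx0 : 0 < 196 * L * Rs / μ := by positivity
      have ha0 : 0 < a := Real.rpow_pos_of_pos hx0 _
      have ha3 : a ^ 3 = 196 * L * Rs / μ := by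
        rw [ha, ← Real.rpow_natCast ((196 * L * Rs / μ) ^ ((1:ℝ)/3)) 3,
          ← Real.rpow_mul hx0.le]
        norm_num
      set b := 4 * (24 * β / μ) ^ ((1:ℝ)/2) with hbdef
      have hy0 : 0 < 24 * β / μ := by positivity
      have hb0 : 0 < b := by positivity
      have hb2 : b ^ 2 = 16 * (24 * β / μ) := by
        rw [hbdef, mul_pow, ← Real.rpow_natCast ((24 * β / μ) ^ ((1:ℝ)/2)) 2,
          ← Real.rpow_mul hy0.le]
        norm_num
      have htt : t (s+1) = 2 * max a b := ht s
      have htpos : 0 < t (s+1) := by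
        rw [htt]
        have : 0 < max a b := lt_of_lt_of_le ha0 (le_max_left a b)
        linarith
      have hta : 2 * a ≤ t (s+1) := by
        rw [htt]; have := le_max_left a b; linarith
      have htb : 2 * b ≤ t (s+1) := by
        rw [htt]; have := le_max_right a b; linarith
      have ht3 : 8 * (196 * L * Rs / μ) ≤ t (s+1) ^ 3 := by
        have h1 : (2*a) ^ 3 ≤ t (s+1) ^ 3 :=
          pow_le_pow_left₀ (by positivity) hta 3
        have h2 : (2*a)^3 = 8 * a^3 := by ring
        rw [h2, ha3] at h1
        exact h1
      have ht2 : 64 * (24 * β / μ) ≤ t (s+1) ^ 2 := by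
        have h1 : (2*b) ^ 2 ≤ t (s+1) ^ 2 :=
          pow_le_pow_left₀ (by positivity) htb 2
        have h2 : (2*b)^2 = 4 * b^2 := by ring
        rw [h2, hb2] at h1
        linarith
      have hr3 : r^3 ≤ r^2 * Rs := by nlinarith [ih]
      have hterm1 : 98 * L * r ^ 3 / t (s+1) ^ 3 ≤ μ * r^2 / 16 := by
        rw [div_le_iff₀ (pow_pos htpos 3)]
        have key1 : μ * r^2/16 * (8*(196*L*Rs/μ)) = 98 * L * (r^2 * Rs) := by
          field_simp; ring
        have h1 := mul_le_mul_of_nonneg_left ht3 (by positivity : (0:ℝ) ≤ μ * r^2/16)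
        have h2 : 98*L*r^3 ≤ 98*L*(r^2*Rs) := by nlinarith [hr3, hL.le]
        linarith
      have hterm2 : 48 * β * r ^ 2 / t (s+1) ^ 2 ≤ μ * r^2 / 32 := by
        rw [div_le_iff₀ (pow_pos htpos 2)]
        have key2 : μ * r^2/32 * (64*(24*β/μ)) = 48 * β * r^2 := by
          field_simp; ring
        have h1 := mul_le_mul_of_nonneg_left ht2 (by positivity : (0:ℝ) ≤ μ * r^2/32)
        linarith
      have hFb : F (z (s+1)) - F xstar ≤ 3*μ*r^2/32 := by
        have := hstage s
        rw [← hrdef] at this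
        linarith
      have hsc' := aux_sc6 F μ xstar hsc hmin (z (s+1))
      have hw2 : ‖z (s+1) - xstar‖^2 ≤ (r/2)^2 := by
        nlinarith [hsc', hFb, hμ]
      have hhalf : ‖z (s+1) - xstar‖ ≤ r/2 := by
        have hwn := norm_nonneg (z (s+1) - xstar)
        nlinarith [hw2, hwn, hrn]
      have : R₀ / 2 ^ (s+1) = Rs / 2 := by
        rw [hRs, pow_succ]; ring
      rw [this]
      linarith
  have hτ₁pos : 0 < τ₁ := by rw [hτ₁]; positivity
  have hMpos : 0 < max τ₁ τ₂ := lt_of_lt_of_le hτ₁pos (le_max_left _ _)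
  have parti : ∀ s : ℕ, 1 ≤ s → t s ≤ max τ₁ τ₂ := by
    intro s hs
    obtain ⟨k, rfl⟩ := Nat.exists_eq_add_of_le hs
    rw [show 1 + k = k + 1 from Nat.add_comm 1 k, ht k]
    have hRle : R₀ / 2 ^ k ≤ R₀ := by
      have h1 : (1:ℝ) ≤ 2 ^ k := one_le_pow₀ (by norm_num)
      rw [div_le_iff₀ (by positivity)]
      nlinarith
    have h1 : (196 * L * (R₀ / 2 ^ k) / μ) ^ ((1:ℝ)/3)
        ≤ (196*L*R₀/μ)^((1:ℝ)/3) := by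
      gcongr
    rw [mul_max_of_nonneg _ _ (by norm_num : (0:ℝ) ≤ 2)]
    apply max_le_max
    · rw [hτ₁]; linarith
    · exact le_of_eq (by rw [hτ₂]; ring)
  refine ⟨parti, ?_⟩
  intro T hT
  set M := max τ₁ τ₂ with hM
  set sN := ⌊T / (2 * M)⌋₊ with hsN
  have hfl : (sN : ℝ) ≤ T / (2 * M) := Nat.floor_le (by positivity)
  have hfl2 : T / (2 * M) < sN + 1 := Nat.lt_floor_add_one _
  refine ⟨?_, ?_, ?_⟩
  · calc (∑ i ∈ Finset.range sN, 2 * t (i + 1))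
        ≤ ∑ i ∈ Finset.range sN, 2 * M := by
          apply Finset.sum_le_sum
          intro i _
          have := parti (i+1) (Nat.le_add_left 1 i)
          linarith
      _ = sN * (2 * M) := by
          rw [Finset.sum_const, Finset.card_range, nsmul_eq_mul]
      _ ≤ T := by
          rw [← le_div_iff₀ (by positivity)]
          exact hfl
  · have h1 : R₀ * (2:ℝ) ^ (-(sN:ℝ)) = R₀ / 2 ^ sN := by
      rw [Real.rpow_neg (by norm_num), Real.rpow_natCast]
      ring
    rw [h1]
    exact hdist sN
  · have h2 : 2 * R₀ * (2:ℝ) ^ (-(T / (2*M))) = R₀ * (2:ℝ) ^ (1 - T/(2*M)) := by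
      rw [sub_eq_add_neg, Real.rpow_add (by norm_num : (0:ℝ) < 2), Real.rpow_one]
      ring
    rw [h2]
    apply mul_le_mul_of_nonneg_left _ hR₀.le
    apply Real.rpow_le_rpow_left_iff (by norm_num : (1:ℝ) < 2) |>.mpr
    linarith
end
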